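/- Let (G,H) be a CSS pair with n columns, k = n − rank(G) − rank(H), and adapted dual H*; let K > 0, 0 ≤ p ≤ 1, and 0 < δ < 1. Set M = 2K + (k/n)·ln 2. Then the failure probability of maximum-likelihood decoding satisfies 1 − P_succ(G,H;K,p) ≥ δ · ([ΔF_e(G,H;K)]_p + ln(1−δ)) / (n·M). -/
import Mathlib


open Matrix Filter

/-- Partition function `Z_e(G;K)` of the random-bond Ising model in Wegner's form. -/
noncomputable def Zf {ρ : Type*} [Fintype ρ] [DecidableEq ρ] {n : ℕ}
    (G : Matrix ρ (Fin n) (ZMod 2)) (e : Fin n → ZMod 2) (K : ℝ) : ℝ :=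
  ∑ α : ρ → ZMod 2,
    Real.exp (K * ∑ b : Fin n, (-1 : ℝ) ^ ((e b).val + ((Matrix.vecMul α G) b).val))

/-- `Hs` is an adapted dual of `H`: it stacks `G` on top of `k` extra rows, and its
row space equals `C_H^⊥ = {c | H cᵀ = 0}`. -/
def IsAdaptedDual {rG rH k n : ℕ} (G : Matrix (Fin rG) (Fin n) (ZMod 2))
    (H : Matrix (Fin rH) (Fin n) (ZMod 2))
    (Hs : Matrix (Fin rG ⊕ Fin k) (Fin n) (ZMod 2)) : Prop :=
  (∀ i, Hs (Sum.inl i) = G i) ∧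
  LinearMap.range Hs.vecMulLinear = LinearMap.ker H.mulVecLin

/-- Homological difference `ΔF_e(G,H;K) = ln Z_e(H*;K) − ln Z_e(G;K)`. -/
noncomputable def deltaF {ρ ρ' : Type*} [Fintype ρ] [DecidableEq ρ] [Fintype ρ'] [DecidableEq ρ'] {n : ℕ}
    (G : Matrix ρ (Fin n) (ZMod 2)) (Hs : Matrix ρ' (Fin n) (ZMod 2))
    (e : Fin n → ZMod 2) (K : ℝ) : ℝ :=
  Real.log (Zf Hs e K) - Real.log (Zf G e K)

/-- Disorder average `[X_e]_p = Σ_e p^{|e|}(1−p)^{n−|e|} X_e`. -/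
noncomputable def davg {n : ℕ} (p : ℝ) (X : (Fin n → ZMod 2) → ℝ) : ℝ :=
  ∑ e : Fin n → ZMod 2, p ^ hammingNorm e * (1 - p) ^ (n - hammingNorm e) * X e

/-- Average success probability of maximum-likelihood decoding. -/
noncomputable def Psucc {ρ ρ' : Type*} [Fintype ρ] [DecidableEq ρ] [Fintype ρ'] [DecidableEq ρ'] {n : ℕ}
    (G : Matrix ρ (Fin n) (ZMod 2)) (Hs : Matrix ρ' (Fin n) (ZMod 2))
    (K p : ℝ) : ℝ :=
  davg p (fun e => Zf G e K / Zf Hs e K)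

/-- CSS distance `d_G`: minimum Hamming weight of a vector `c` with `H cᵀ = 0`
that is not in the row space of `G`. -/
noncomputable def dCSS {rG rH n : ℕ} (G : Matrix (Fin rG) (Fin n) (ZMod 2))
    (H : Matrix (Fin rH) (Fin n) (ZMod 2)) : ℕ :=
  sInf {w | ∃ c : Fin n → ZMod 2,
    H.mulVec c = 0 ∧ (¬ ∃ α, Matrix.vecMul α G = c) ∧ hammingNorm c = w}

lemma neg_one_pow_bounds (m : ℕ) : -1 ≤ (-1:ℝ)^m ∧ (-1:ℝ)^m ≤ 1 := by
  rcases Nat.even_or_odd m with h | h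
  · rw [h.neg_one_pow]; norm_num
  · rw [h.neg_one_pow]; norm_num

lemma Zf_pos {ρ : Type*} [Fintype ρ] [DecidableEq ρ] {n : ℕ}
    (G : Matrix ρ (Fin n) (ZMod 2)) (e : Fin n → ZMod 2) (K : ℝ) : 0 < Zf G e K :=
  Finset.sum_pos (fun _ _ => Real.exp_pos _) Finset.univ_nonempty

lemma Zf_upper {ρ : Type*} [Fintype ρ] [DecidableEq ρ] {n : ℕ}
    (G : Matrix ρ (Fin n) (ZMod 2)) (e : Fin n → ZMod 2) {K : ℝ} (hK : 0 ≤ K) :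
    Zf G e K ≤ (Fintype.card (ρ → ZMod 2) : ℝ) * Real.exp (K * n) := by
  unfold Zf
  calc ∑ α : ρ → ZMod 2, Real.exp (K * ∑ b : Fin n, (-1:ℝ) ^ ((e b).val + ((Matrix.vecMul α G) b).val))
      ≤ ∑ _α : ρ → ZMod 2, Real.exp (K * n) := by
        refine Finset.sum_le_sum fun α _ => Real.exp_le_exp.mpr (mul_le_mul_of_nonneg_left ?_ hK)
        calc ∑ b : Fin n, (-1:ℝ) ^ ((e b).val + ((Matrix.vecMul α G) b).val)
            ≤ ∑ _b : Fin n, (1:ℝ) := Finset.sum_le_sum fun b _ => (neg_one_pow_bounds _).2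
          _ = n := by simp
    _ = (Fintype.card (ρ → ZMod 2) : ℝ) * Real.exp (K * n) := by
        rw [Finset.sum_const, nsmul_eq_mul, Finset.card_univ]

lemma Zf_lower {ρ : Type*} [Fintype ρ] [DecidableEq ρ] {n : ℕ}
    (G : Matrix ρ (Fin n) (ZMod 2)) (e : Fin n → ZMod 2) {K : ℝ} (hK : 0 ≤ K) :
    (Fintype.card (ρ → ZMod 2) : ℝ) * Real.exp (-(K * n)) ≤ Zf G e K := by
  unfold Zf
  calc (Fintype.card (ρ → ZMod 2) : ℝ) * Real.exp (-(K * n))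
      = ∑ _α : ρ → ZMod 2, Real.exp (-(K * n)) := by
        rw [Finset.sum_const, nsmul_eq_mul, Finset.card_univ]
    _ ≤ ∑ α : ρ → ZMod 2, Real.exp (K * ∑ b : Fin n, (-1:ℝ) ^ ((e b).val + ((Matrix.vecMul α G) b).val)) := by
        refine Finset.sum_le_sum fun α _ => Real.exp_le_exp.mpr ?_
        rw [neg_mul_eq_mul_neg]
        refine mul_le_mul_of_nonneg_left ?_ hK
        calc (-(n:ℝ)) = ∑ _b : Fin n, (-1:ℝ) := by simp
          _ ≤ _ := Finset.sum_le_sum fun b _ => (neg_one_pow_bounds _).1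

lemma Zf_mono {rG k n : ℕ} (G : Matrix (Fin rG) (Fin n) (ZMod 2))
    (Hs : Matrix (Fin rG ⊕ Fin k) (Fin n) (ZMod 2))
    (h1 : ∀ i, Hs (Sum.inl i) = G i) (e : Fin n → ZMod 2) (K : ℝ) :
    Zf G e K ≤ Zf Hs e K := by
  have key : ∀ α : Fin rG → ZMod 2, Matrix.vecMul (Sum.elim α 0) Hs = Matrix.vecMul α G := by
    intro α; funext b
    simp only [Matrix.vecMul, dotProduct, Fintype.sum_sum_type]
    simp [h1]
  have hinj : Function.Injective (fun α : Fin rG → ZMod 2 => (Sum.elim α 0 : Fin rG ⊕ Fin k → ZMod 2)) := by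
    intro a b hab
    funext i
    exact congrFun hab (Sum.inl i)
  unfold Zf
  rw [show (∑ α : Fin rG → ZMod 2, Real.exp (K * ∑ b : Fin n, (-1:ℝ) ^ ((e b).val + ((Matrix.vecMul α G) b).val)))
      = ∑ α : Fin rG → ZMod 2, Real.exp (K * ∑ b : Fin n, (-1:ℝ) ^ ((e b).val + ((Matrix.vecMul (Sum.elim α 0 : Fin rG ⊕ Fin k → ZMod 2) Hs) b).val)) from
    Finset.sum_congr rfl fun α _ => by rw [key]]
  rw [← Finset.sum_image (s := Finset.univ)
    (g := fun α : Fin rG → ZMod 2 => (Sum.elim α 0 : Fin rG ⊕ Fin k → ZMod 2))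
    (f := fun γ : Fin rG ⊕ Fin k → ZMod 2 => Real.exp (K * ∑ b : Fin n, (-1:ℝ) ^ ((e b).val + ((Matrix.vecMul γ Hs) b).val)))
    (fun a _ b _ hab => hinj hab)]
  exact Finset.sum_le_sum_of_subset_of_nonneg (Finset.subset_univ _)
    (fun _ _ _ => (Real.exp_pos _).le)

lemma weight_eq_prod {n : ℕ} (p : ℝ) (e : Fin n → ZMod 2) :
    p ^ hammingNorm e * (1 - p) ^ (n - hammingNorm e) =
      ∏ b : Fin n, (if e b ≠ 0 then p else 1 - p) := by
  classical
  rw [Finset.prod_ite, Finset.prod_const, Finset.prod_const]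
  have h1 : (Finset.filter (fun x => e x ≠ 0) Finset.univ).card = hammingNorm e := by
    simp [hammingNorm]
  have h2 : (Finset.filter (fun x => ¬ e x ≠ 0) Finset.univ).card = n - hammingNorm e := by
    have hcard := Finset.card_filter_add_card_filter_not
      (s := (Finset.univ : Finset (Fin n))) (p := fun x => e x ≠ 0)
    simp only [Finset.card_univ, Fintype.card_fin] at hcard
    omega
  rw [h1, h2]

lemma sum_weights {n : ℕ} (p : ℝ) :
    ∑ e : Fin n → ZMod 2, p ^ hammingNorm e * (1 - p) ^ (n - hammingNorm e) = 1 := by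
  simp_rw [weight_eq_prod]
  rw [← Fintype.prod_sum (fun (_ : Fin n) (v : ZMod 2) => if v ≠ 0 then p else 1 - p)]
  have : ∑ v : ZMod 2, (if v ≠ 0 then p else 1 - p) = 1 := by
    rw [show (Finset.univ : Finset (ZMod 2)) = {0, 1} from by decide]
    rw [Finset.sum_insert (by decide), Finset.sum_singleton]
    norm_num
  simp only [this, Finset.prod_const, one_pow]

lemma weight_nonneg {n : ℕ} {p : ℝ} (hp0 : 0 ≤ p) (hp1 : p ≤ 1) (e : Fin n → ZMod 2) :
    0 ≤ p ^ hammingNorm e * (1 - p) ^ (n - hammingNorm e) :=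
  mul_nonneg (pow_nonneg hp0 _) (pow_nonneg (by linarith) _)

lemma davg_mono {n : ℕ} {p : ℝ} (hp0 : 0 ≤ p) (hp1 : p ≤ 1)
    {X Y : (Fin n → ZMod 2) → ℝ} (h : ∀ e, X e ≤ Y e) : davg p X ≤ davg p Y :=
  Finset.sum_le_sum fun e _ => mul_le_mul_of_nonneg_left (h e) (weight_nonneg hp0 hp1 e)

lemma davg_affine {n : ℕ} (p a c : ℝ) (X : (Fin n → ZMod 2) → ℝ) :
    davg p (fun e => a * X e + c) = a * davg p X + c := by
  unfold davg
  simp_rw [mul_add]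
  rw [Finset.sum_add_distrib]
  congr 1
  · rw [Finset.mul_sum]
    exact Finset.sum_congr rfl fun e _ => by ring
  · rw [← Finset.sum_mul, sum_weights, one_mul]

lemma pointwise_bound {q NM δ : ℝ} (hq0 : 0 < q) (hq1 : q ≤ 1)
    (hΔ : -Real.log q ≤ NM) (hNM : 0 < NM) (hδ0 : 0 < δ) (hδ1 : δ < 1) :
    δ * (-Real.log q + Real.log (1 - δ)) / NM ≤ 1 - q := by
  have hlog1δ : Real.log (1 - δ) < 0 :=
    Real.log_neg (by linarith) (by linarith)
  rcases le_or_gt (-Real.log q + Real.log (1 - δ)) 0 with h | h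
  · have : δ * (-Real.log q + Real.log (1 - δ)) / NM ≤ 0 :=
      div_nonpos_of_nonpos_of_nonneg (mul_nonpos_of_nonneg_of_nonpos hδ0.le h) hNM.le
    linarith
  · have hq : q < 1 - δ := by
      have hlt : Real.log q < Real.log (1 - δ) := by linarith
      calc q = Real.exp (Real.log q) := (Real.exp_log hq0).symm
        _ < Real.exp (Real.log (1 - δ)) := Real.exp_lt_exp.mpr hlt
        _ = 1 - δ := Real.exp_log (by linarith)
    have h2 : (-Real.log q + Real.log (1 - δ)) / NM ≤ 1 := by
      rw [div_le_one hNM]; linarith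
    calc δ * (-Real.log q + Real.log (1 - δ)) / NM
        = δ * ((-Real.log q + Real.log (1 - δ)) / NM) := by ring
      _ ≤ δ * 1 := mul_le_mul_of_nonneg_left h2 hδ0.le
      _ ≤ 1 - q := by linarith

lemma deltaF_nonneg {rG k n : ℕ} (G : Matrix (Fin rG) (Fin n) (ZMod 2))
    (Hs : Matrix (Fin rG ⊕ Fin k) (Fin n) (ZMod 2))
    (h1 : ∀ i, Hs (Sum.inl i) = G i) (e : Fin n → ZMod 2) (K : ℝ) :
    0 ≤ deltaF G Hs e K :=
  sub_nonneg.mpr (Real.log_le_log (Zf_pos G e K) (Zf_mono G Hs h1 e K))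

lemma deltaF_le {rG k n : ℕ} (G : Matrix (Fin rG) (Fin n) (ZMod 2))
    (Hs : Matrix (Fin rG ⊕ Fin k) (Fin n) (ZMod 2))
    (e : Fin n → ZMod 2) {K : ℝ} (hK : 0 ≤ K) :
    deltaF G Hs e K ≤ (k : ℝ) * Real.log 2 + 2 * K * n := by
  have hG := Zf_pos G e K
  have hHs := Zf_pos Hs e K
  have hcards : (Fintype.card ((Fin rG ⊕ Fin k) → ZMod 2) : ℝ) =
      (2:ℝ) ^ k * (Fintype.card ((Fin rG) → ZMod 2) : ℝ) := by
    rw [Fintype.card_fun, Fintype.card_fun]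
    simp only [Fintype.card_sum, Fintype.card_fin, ZMod.card]
    push_cast [pow_add]
    ring
  have hexp : Real.exp (2 * K * n) * Real.exp (-(K * n)) = Real.exp (K * n) := by
    rw [← Real.exp_add]; ring_nf
  have hup : Zf Hs e K ≤ (2:ℝ) ^ k * Real.exp (2 * K * n) * Zf G e K := by
    calc Zf Hs e K ≤ (Fintype.card ((Fin rG ⊕ Fin k) → ZMod 2) : ℝ) * Real.exp (K * n) :=
          Zf_upper Hs e hK
      _ = (2:ℝ) ^ k * Real.exp (2 * K * n) *
            ((Fintype.card ((Fin rG) → ZMod 2) : ℝ) * Real.exp (-(K * n))) := by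
          rw [hcards, ← hexp]; ring
      _ ≤ (2:ℝ) ^ k * Real.exp (2 * K * n) * Zf G e K := by
          refine mul_le_mul_of_nonneg_left (Zf_lower G e hK) (by positivity)
  have hlog := Real.log_le_log hHs hup
  rw [Real.log_mul (by positivity) hG.ne', Real.log_mul (by positivity) (Real.exp_pos _).ne',
    Real.log_pow, Real.log_exp] at hlog
  unfold deltaF
  linarith

lemma davg_const {n : ℕ} (p c : ℝ) : davg p (fun _ : Fin n → ZMod 2 => c) = c := by
  have h := davg_affine p 0 c (fun _ : Fin n → ZMod 2 => (0:ℝ))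
  simpa using h

/-- Lower bound on the ML-decoding failure probability in terms of the
disorder-averaged homological difference. -/
theorem stmt8 {rG rH k n : ℕ} (G : Matrix (Fin rG) (Fin n) (ZMod 2))
    (H : Matrix (Fin rH) (Fin n) (ZMod 2)) (hGH : G * Hᵀ = 0)
    (hk : k = n - G.rank - H.rank)
    (Hs : Matrix (Fin rG ⊕ Fin k) (Fin n) (ZMod 2))
    (hHs : IsAdaptedDual G H Hs)
    (K p δ : ℝ) (hK : 0 < K) (hp0 : 0 ≤ p) (hp1 : p ≤ 1)
    (hδ0 : 0 < δ) (hδ1 : δ < 1)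
    (M : ℝ) (hM : M = 2 * K + ((k : ℝ) / (n : ℝ)) * Real.log 2) :
    1 - Psucc G Hs K p ≥
      δ * (davg p (fun e => deltaF G Hs e K) + Real.log (1 - δ)) / ((n : ℝ) * M) := by

  obtain ⟨h1, -⟩ := hHs
  have hq0 : ∀ e : Fin n → ZMod 2, 0 < Zf G e K / Zf Hs e K :=
    fun e => div_pos (Zf_pos _ _ _) (Zf_pos _ _ _)
  have hq1 : ∀ e : Fin n → ZMod 2, Zf G e K / Zf Hs e K ≤ 1 :=
    fun e => (div_le_one (Zf_pos Hs e K)).mpr (Zf_mono G Hs h1 e K)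
  have hΔq : ∀ e : Fin n → ZMod 2, deltaF G Hs e K = -Real.log (Zf G e K / Zf Hs e K) := by
    intro e
    rw [Real.log_div (Zf_pos G e K).ne' (Zf_pos Hs e K).ne']
    unfold deltaF; ring
  have hPsucc : 1 - Psucc G Hs K p = davg p (fun e => 1 - Zf G e K / Zf Hs e K) := by
    have h2 : (fun e : Fin n → ZMod 2 => 1 - Zf G e K / Zf Hs e K) =
        (fun e => (-1) * (Zf G e K / Zf Hs e K) + 1) := by funext e; ring
    rw [h2, davg_affine]
    unfold Psucc; ring
  rcases Nat.eq_zero_or_pos n with hn | hn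
  · subst hn
    simp only [Nat.cast_zero, zero_mul, div_zero, ge_iff_le]
    rw [hPsucc]
    have h0 : davg p (fun _ : Fin 0 → ZMod 2 => (0:ℝ)) ≤
        davg p (fun e => 1 - Zf G e K / Zf Hs e K) :=
      davg_mono hp0 hp1 (fun e => by linarith [hq1 e])
    rwa [davg_const] at h0
  · have hn' : 0 < (n : ℝ) := by exact_mod_cast hn
    have hNM : 0 < (n : ℝ) * M := by
      rw [hM]
      have hlog2 : 0 ≤ Real.log 2 := Real.log_nonneg one_le_two
      have hkn : 0 ≤ (k : ℝ) / (n : ℝ) := by positivity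
      have : 0 < 2 * K + ((k : ℝ) / (n : ℝ)) * Real.log 2 := by nlinarith
      exact mul_pos hn' this
    have hΔle : ∀ e : Fin n → ZMod 2, -Real.log (Zf G e K / Zf Hs e K) ≤ (n : ℝ) * M := by
      intro e
      rw [← hΔq e]
      calc deltaF G Hs e K ≤ (k : ℝ) * Real.log 2 + 2 * K * n := deltaF_le G Hs e hK.le
        _ = (n : ℝ) * M := by rw [hM]; field_simp; ring
    have hpt : ∀ e : Fin n → ZMod 2,
        δ * (deltaF G Hs e K + Real.log (1 - δ)) / ((n : ℝ) * M) ≤ 1 - Zf G e K / Zf Hs e K := by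
      intro e
      rw [hΔq e]
      exact pointwise_bound (hq0 e) (hq1 e) (hΔle e) hNM hδ0 hδ1
    have hrhs : δ * (davg p (fun e => deltaF G Hs e K) + Real.log (1 - δ)) / ((n : ℝ) * M)
        = davg p (fun e => δ * (deltaF G Hs e K + Real.log (1 - δ)) / ((n : ℝ) * M)) := by
      have hfun : (fun e : Fin n → ZMod 2 => δ * (deltaF G Hs e K + Real.log (1 - δ)) / ((n : ℝ) * M)) =
          (fun e => (δ / ((n : ℝ) * M)) * deltaF G Hs e K + δ * Real.log (1 - δ) / ((n : ℝ) * M)) := by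
        funext e; field_simp
      rw [hfun, davg_affine]
      field_simp
    rw [ge_iff_le, hrhs, hPsucc]
    exact davg_mono hp0 hp1 hpt
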